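/- arXiv:2201.08772 — 2 statements merged into one kernel-verified Lean document; each statement's English description precedes it below -/
import Mathlib

section
/- The fully observable minimum under-approximates all observation-based policy values: in a POMDP with reward function R and goal set G, for every observation-based policy σ, every n ∈ ℕ, and every s ∈ S, U_n(s) ≤ W_n^σ(s). -/
open Finset

attribute [local instance] Classical.propDecidable

noncomputable section

/-- A belief over a finite type `S`: a nonnegative function summing to one. -/
def IsBelief {S : Type} [Fintype S] (b : S → ℝ) : Prop :=
  (∀ s, 0 ≤ b s) ∧ (∑ s, b s = 1)

/-- A belief clip for a belief `b`: `0 ≤ μ(s) ≤ b(s)` pointwise and `Σμ < 1`. -/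
def IsBeliefClip {S : Type} [Fintype S] (b μ : S → ℝ) : Prop :=
  (∀ s, 0 ≤ μ s ∧ μ s ≤ b s) ∧ (∑ s, μ s < 1)

/-- The induced function `b ⊖ μ`, defined by `(b ⊖ μ)(s) = (b(s) − μ(s)) / (1 − Σμ)`. -/
def clipped {S : Type} [Fintype S] (b μ : S → ℝ) : S → ℝ :=
  fun s => (b s - μ s) / (1 - ∑ s', μ s')

variable {S Act Z : Type}

/-- The set of actions enabled in state `s`: those whose outgoing probabilities sum to 1. -/
def enabledA [Fintype S] [Fintype Act] (P : S → Act → S → ℝ) (s : S) : Finset Act :=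
  univ.filter fun α => ∑ s' : S, P s α s' = 1

/-- The actions enabled at an observation `z`: `Act(z) = Act(s)` for some `s` with `O s = z`. -/
def obsEnabled [Fintype S] [Fintype Act] (O : S → Z) (P : S → Act → S → ℝ) (z : Z) :
    Finset Act :=
  if h : ∃ s, O s = z then enabledA P h.choose else ∅

/-- The POMDP assumptions on the observation function `O` and the transition function `P`:
nonnegative transition probabilities, each state-action row sums to 0 or 1, every state has
some enabled action, and equally-observed states have equal enabled actions. -/
def IsPOMDP [Fintype S] [Fintype Act] (O : S → Z) (P : S → Act → S → ℝ) : Prop :=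
  (∀ s α s', 0 ≤ P s α s') ∧
  (∀ s α, (∑ s', P s α s') = 0 ∨ (∑ s', P s α s') = 1) ∧
  (∀ s, (enabledA P s).Nonempty) ∧
  (∀ s s', O s = O s' → enabledA P s = enabledA P s')

/-- `b` has observation `z`: the support of `b` is contained in `O⁻¹(z)`. -/
def HasObs (O : S → Z) (b : S → ℝ) (z : Z) : Prop :=
  ∀ s, 0 < b s → O s = z

/-- `P(s,α,z)`: probability to observe `z` after taking `α` in state `s`. -/
def Pso [Fintype S] (O : S → Z) (P : S → Act → S → ℝ) (s : S) (α : Act) (z : Z) : ℝ :=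
  ∑ s' : S, if O s' = z then P s α s' else 0

/-- `P(b,α,z)`: probability to observe `z` after taking `α` in belief `b`. -/
def Pbo [Fintype S] (O : S → Z) (P : S → Act → S → ℝ) (b : S → ℝ) (α : Act) (z : Z) : ℝ :=
  ∑ s : S, b s * Pso O P s α z

/-- The successor belief `⟦b|α,z⟧`. -/
def succB [Fintype S] (O : S → Z) (P : S → Act → S → ℝ) (b : S → ℝ) (α : Act) (z : Z) :
    S → ℝ :=
  fun s => if O s = z then (∑ s' : S, b s' * P s' α s) / Pbo O P b α z else 0

/-- The belief reward `R(b,α,z)`. -/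
def Rbel [Fintype S] (O : S → Z) (P R : S → Act → S → ℝ) (b : S → ℝ) (α : Act) (z : Z) : ℝ :=
  (∑ s : S, b s * ∑ s' : S, if O s' = z then R s α s' * P s α s' else 0) / Pbo O P b α z

/-- The last observation of a finite observation trace `z₀ α₁ z₁ … αₙ zₙ`,
represented as the pair of `z₀` and the list `[(α₁,z₁),…,(αₙ,zₙ)]`. -/
def lastObs (τ : Z × List (Act × Z)) : Z :=
  (τ.2.getLast?.map Prod.snd).getD τ.1

/-- An observation-based policy: to each finite observation trace it assigns a probability
distribution over actions supported on the actions enabled at the last observation. -/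
def IsObsPolicy [Fintype S] [Fintype Act] (O : S → Z) (P : S → Act → S → ℝ)
    (σ : Z × List (Act × Z) → Act → ℝ) : Prop :=
  ∀ τ, (∀ α, 0 ≤ σ τ α) ∧ (∑ α, σ τ α = 1) ∧
    (∀ α, σ τ α ≠ 0 → ∀ s, O s = lastObs τ → α ∈ enabledA P s)

/-- The shifted policy `σ⇝(z,α)`, behaving as `σ` after observing `z` and taking `α`. -/
def shiftPol (σ : Z × List (Act × Z) → Act → ℝ) (z : Z) (α : Act) :
    Z × List (Act × Z) → Act → ℝ :=
  fun τ => σ (z, (α, τ.1) :: τ.2)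

/-- Goal states are observable: membership in `G` is determined by the observation. -/
def ObservableGoal (O : S → Z) (G : Set S) : Prop :=
  ∃ Z' : Set Z, ∀ s, s ∈ G ↔ O s ∈ Z'

/-- The `n`-step state values `W_n^σ` under an observation-based policy `σ`. -/
def Wval [Fintype S] [Fintype Act] (O : S → Z) (P R : S → Act → S → ℝ) (G : Set S) :
    ℕ → (Z × List (Act × Z) → Act → ℝ) → S → ℝ
  | 0, _, _ => 0
  | n+1, σ, s =>
    if s ∈ G then 0
    else ∑ α ∈ enabledA P s, σ (O s, []) α *
      ∑ s' : S, P s α s' * (R s α s' + Wval O P R G n (shiftPol σ (O s) α) s')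

/-- The `n`-step belief values `V_n^σ(b)` under policy `σ`, for a belief `b` with
observation `z`. -/
def Vpol [Fintype S] [Fintype Act] [Fintype Z] (O : S → Z) (P R : S → Act → S → ℝ)
    (G : Set S) :
    ℕ → (Z × List (Act × Z) → Act → ℝ) → (S → ℝ) → Z → ℝ
  | 0, _, _, _ => 0
  | n+1, σ, b, z =>
    if ∀ s, 0 < b s → s ∈ G then 0
    else ∑ α ∈ obsEnabled O P z, σ (z, []) α *
      ∑ z' ∈ univ.filter (fun z' => 0 < Pbo O P b α z'),
        Pbo O P b α z' *
          (Rbel O P R b α z' + Vpol O P R G n (shiftPol σ z α) (succB O P b α z') z')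

/-- Maximum of `f` over a finite set (0 for the empty set). -/
def maxOver {α : Type} (t : Finset α) (f : α → ℝ) : ℝ :=
  if h : t.Nonempty then t.sup' h f else 0

/-- Minimum of `f` over a finite set (0 for the empty set). -/
def minOver {α : Type} (t : Finset α) (f : α → ℝ) : ℝ :=
  if h : t.Nonempty then t.inf' h f else 0

/-- The `n`-step optimal belief values `V_n(b)`, for a belief `b` with observation `z`. -/
def Vopt [Fintype S] [Fintype Act] [Fintype Z] (O : S → Z) (P R : S → Act → S → ℝ)
    (G : Set S) :
    ℕ → (S → ℝ) → Z → ℝ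
  | 0, _, _ => 0
  | n+1, b, z =>
    if ∀ s, 0 < b s → s ∈ G then 0
    else maxOver (obsEnabled O P z) fun α =>
      ∑ z' ∈ univ.filter (fun z' => 0 < Pbo O P b α z'),
        Pbo O P b α z' * (Rbel O P R b α z' + Vopt O P R G n (succB O P b α z') z')

/-- The `n`-step minimal values `U_n` on the underlying fully observable MDP. -/
def Umin [Fintype S] [Fintype Act] (P R : S → Act → S → ℝ) (G : Set S) : ℕ → S → ℝ
  | 0, _ => 0
  | n+1, s =>
    if s ∈ G then 0
    else minOver (enabledA P s) fun α =>
      ∑ s' : S, P s α s' * (R s α s' + Umin P R G n s')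

end

/-! Induction on `n`, for all policies at once. In a non-goal state, `W_{n+1}^σ(s)` averages
over the enabled actions with the weights `σ(O(s))`; each action's term dominates the
corresponding term of `U_{n+1}(s)` by induction, applied to the shifted policy, which is again
observation-based. A weighted average of quantities each at least the minimum is at least the
minimum. -/

theorem minOver_le {α : Type} {t : Finset α} {a : α} (f : α → ℝ) (ha : a ∈ t) :
    minOver t f ≤ f a := by
  rw [minOver, dif_pos ⟨a, ha⟩]
  exact Finset.inf'_le f ha

theorem le_sum_mul_of_forall_le {α : Type} {t : Finset α} {w f : α → ℝ} {c : ℝ}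
    (hw : ∀ a ∈ t, 0 ≤ w a) (hw1 : ∑ a ∈ t, w a = 1) (hc : ∀ a ∈ t, c ≤ f a) :
    c ≤ ∑ a ∈ t, w a * f a :=
  calc c = ∑ a ∈ t, w a * c := by rw [← Finset.sum_mul, hw1, one_mul]
    _ ≤ ∑ a ∈ t, w a * f a :=
      Finset.sum_le_sum fun a ha => mul_le_mul_of_nonneg_left (hc a ha) (hw a ha)

theorem lastObs_cons {Act Z : Type} (z : Z) (α : Act) (τ : Z × List (Act × Z)) :
    lastObs (z, (α, τ.1) :: τ.2) = lastObs τ := by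
  obtain ⟨z₀, l⟩ := τ
  cases l <;> simp [lastObs, List.getLast?_cons]

section ObsPolicy

variable {S Act Z : Type} [Fintype S] [Fintype Act] {O : S → Z} {P : S → Act → S → ℝ}
  {σ : Z × List (Act × Z) → Act → ℝ}

theorem IsObsPolicy.shiftPol (hσ : IsObsPolicy O P σ) (z : Z) (α : Act) :
    IsObsPolicy O P (shiftPol σ z α) := by
  intro τ
  obtain ⟨hnonneg, hsum, henabled⟩ := hσ (z, (α, τ.1) :: τ.2)
  exact ⟨hnonneg, hsum, fun β hβ s hs => henabled β hβ s (hs.trans (lastObs_cons z α τ).symm)⟩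

theorem IsObsPolicy.sum_enabledA_eq_one (hσ : IsObsPolicy O P σ) (s : S) :
    ∑ α ∈ enabledA P s, σ (O s, []) α = 1 := by
  obtain ⟨-, hsum, henabled⟩ := hσ (O s, [])
  rw [← hsum]
  refine Finset.sum_subset (Finset.subset_univ _) fun α _ hα => ?_
  by_contra hne
  exact hα (henabled α hne s rfl)

end ObsPolicy

theorem stmt_16_general {S Act Z : Type} [Fintype S] [Fintype Act]
    (O : S → Z) (P : S → Act → S → ℝ) (hM : IsPOMDP O P)
    (R : S → Act → S → ℝ) (G : Set S)
    (σ : Z × List (Act × Z) → Act → ℝ) (hσ : IsObsPolicy O P σ) (n : ℕ) (s : S) :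
    Umin P R G n s ≤ Wval O P R G n σ s := by
  induction n generalizing σ s with
  | zero => simp [Umin, Wval]
  | succ n ih =>
    rw [Umin, Wval]
    split_ifs with hG
    · exact le_rfl
    refine le_sum_mul_of_forall_le (fun α _ => (hσ (O s, [])).1 α)
      (hσ.sum_enabledA_eq_one s) fun α hα => ?_
    calc minOver (enabledA P s) (fun α => ∑ s', P s α s' * (R s α s' + Umin P R G n s'))
        ≤ ∑ s', P s α s' * (R s α s' + Umin P R G n s') := minOver_le _ hα
      _ ≤ ∑ s', P s α s' * (R s α s' + Wval O P R G n (shiftPol σ (O s) α) s') :=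
        Finset.sum_le_sum fun s' _ => mul_le_mul_of_nonneg_left
          (add_le_add_right (ih _ (hσ.shiftPol (O s) α) s') _) (hM.1 s α s')

/-- the fully observable minimum under-approximates all observation-based
policy values: `U_n(s) ≤ W_n^σ(s)`. -/
theorem stmt_16 {S Act Z : Type} [Fintype S] [Nonempty S] [Fintype Act] [Nonempty Act]
    [Fintype Z] [Nonempty Z]
    (O : S → Z) (P : S → Act → S → ℝ) (hM : IsPOMDP O P)
    (R : S → Act → S → ℝ) (G : Set S)
    (σ : Z × List (Act × Z) → Act → ℝ) (hσ : IsObsPolicy O P σ) (n : ℕ) (s : S) :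
    Umin P R G n s ≤ Wval O P R G n σ s :=
  stmt_16_general O P hM R G σ hσ n s
end

section
/- Limit form of the belief clipping lemma for nonnegative rewards: in a POMDP with reward function R satisfying R(s,α,s') ≥ 0 for all s, α, s' and observable goal set G, let b be a belief over S with an observation, let μ be a belief clip for b with Δ := Σμ, and let b̃ := b ⊖ μ. Then, with V*(c) := ⨆_{n∈ℕ} V_n(c) and U*(s) := ⨆_{n∈ℕ} U_n(s) taken in [0,∞], it holds that (1 − Δ)·V*(b̃) + ∑_{s∈S} μ(s)·U*(s) ≤ V*(b). -/
open Finset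

attribute [local instance] Classical.propDecidable

/-! `Vopt` extends to unnormalised vectors and is positively homogeneous there (`Vopt_smul`), so the
Bellman step can be written with the unnormalised successors `succMass`, which are linear in the
belief. The core estimate is `V_n(b - ν) + ∑ ν·U_n ≤ V_n(b)` for `0 ≤ ν ≤ b`, by induction on `n`:
the optimal action for `b - ν` is enabled in every state of the support of `ν`, where it bounds
`U_{n+1}` by one step of the MDP, and the induction hypothesis is applied at each observation to
the successor masses of `b` and `ν`. Since `b - μ = (1 - Δ) • (b ⊖ μ)`, this is the `n`-step
clipping inequality, and it passes to the suprema because `V_n` and `U_n` increase with `n`. -/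

section MaxMinOver

variable {ι : Type} {t : Finset ι} {f g : ι → ℝ}

lemma le_maxOver {a : ι} (h : a ∈ t) : f a ≤ maxOver t f := by
  rw [maxOver, dif_pos ⟨a, h⟩]
  exact le_sup' f h

lemma minOver_le_s19 {a : ι} (h : a ∈ t) : minOver t f ≤ f a := by
  rw [minOver, dif_pos ⟨a, h⟩]
  exact inf'_le f h

lemma exists_maxOver_eq (h : t.Nonempty) (f : ι → ℝ) : ∃ a ∈ t, maxOver t f = f a := by
  rw [maxOver, dif_pos h]
  exact exists_mem_eq_sup' h f

lemma maxOver_nonneg (h : ∀ a ∈ t, 0 ≤ f a) : 0 ≤ maxOver t f := by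
  rw [maxOver]
  split_ifs with ht
  · obtain ⟨a, ha⟩ := ht
    exact (h a ha).trans (le_sup' f ha)
  · rfl

lemma minOver_nonneg (h : ∀ a ∈ t, 0 ≤ f a) : 0 ≤ minOver t f := by
  rw [minOver]
  split_ifs
  · exact le_inf' _ _ h
  · rfl

lemma maxOver_mono (h : ∀ a ∈ t, f a ≤ g a) : maxOver t f ≤ maxOver t g := by
  unfold maxOver
  split_ifs
  · exact sup'_mono_fun h
  · rfl

lemma minOver_mono (h : ∀ a ∈ t, f a ≤ g a) : minOver t f ≤ minOver t g := by
  unfold minOver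
  split_ifs
  · exact inf'_mono_fun h
  · rfl

lemma maxOver_const_mul {c : ℝ} (hc : 0 ≤ c) :
    maxOver t (fun a => c * f a) = c * maxOver t f := by
  unfold maxOver
  split_ifs with ht
  · exact (mul₀_sup' hc f t ht).symm
  · rw [mul_zero]

end MaxMinOver

section Transitions

variable {S Act Z : Type} [Fintype S] {O : S → Z} {P R : S → Act → S → ℝ}

variable (O P) in
noncomputable def succMass (b : S → ℝ) (α : Act) (z : Z) : S → ℝ :=
  fun s' => if O s' = z then ∑ s, b s * P s α s' else 0

variable (O P R) in
noncomputable def rewardObs (s : S) (α : Act) (z : Z) : ℝ :=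
  ∑ s', if O s' = z then R s α s' * P s α s' else 0

lemma Pso_nonneg (hP : ∀ s α s', 0 ≤ P s α s') (s : S) (α : Act) (z : Z) :
    0 ≤ Pso O P s α z :=
  sum_nonneg fun s' _ => by split_ifs <;> simp [hP]

lemma Pbo_nonneg (hP : ∀ s α s', 0 ≤ P s α s') {b : S → ℝ} (hb : ∀ s, 0 ≤ b s)
    (α : Act) (z : Z) : 0 ≤ Pbo O P b α z :=
  sum_nonneg fun s _ => mul_nonneg (hb s) (Pso_nonneg hP s α z)

lemma rewardObs_nonneg (hP : ∀ s α s', 0 ≤ P s α s') (hR : ∀ s α s', 0 ≤ R s α s')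
    (s : S) (α : Act) (z : Z) : 0 ≤ rewardObs O P R s α z :=
  sum_nonneg fun s' _ => by split_ifs <;> simp [mul_nonneg, hP, hR]

lemma succMass_nonneg (hP : ∀ s α s', 0 ≤ P s α s') {b : S → ℝ} (hb : ∀ s, 0 ≤ b s)
    (α : Act) (z : Z) (s' : S) : 0 ≤ succMass O P b α z s' := by
  unfold succMass
  split_ifs
  · exact sum_nonneg fun s _ => mul_nonneg (hb s) (hP s α s')
  · rfl

lemma succMass_mono (hP : ∀ s α s', 0 ≤ P s α s') {b c : S → ℝ} (h : ∀ s, b s ≤ c s)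
    (α : Act) (z : Z) (s' : S) : succMass O P b α z s' ≤ succMass O P c α z s' := by
  unfold succMass
  split_ifs
  · exact sum_le_sum fun s _ => mul_le_mul_of_nonneg_right (h s) (hP s α s')
  · rfl

lemma succMass_sub (b c : S → ℝ) (α : Act) (z : Z) :
    succMass O P (b - c) α z = succMass O P b α z - succMass O P c α z := by
  funext s'
  simp only [succMass, Pi.sub_apply, sub_mul, sum_sub_distrib]
  split_ifs <;> simp

lemma hasObs_succMass (b : S → ℝ) (α : Act) (z : Z) : HasObs O (succMass O P b α z) z := by
  intro s hs
  by_contra h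
  simp [succMass, h] at hs

lemma Pbo_smul_succB {b : S → ℝ} {α : Act} {z : Z} (h : Pbo O P b α z ≠ 0) :
    Pbo O P b α z • succB O P b α z = succMass O P b α z := by
  funext s
  simp only [Pi.smul_apply, smul_eq_mul, succB, succMass]
  split_ifs
  · exact mul_div_cancel₀ _ h
  · rw [mul_zero]

lemma Pbo_mul_Rbel {b : S → ℝ} {α : Act} {z : Z} (h : Pbo O P b α z ≠ 0) :
    Pbo O P b α z * Rbel O P R b α z = ∑ s, b s * rewardObs O P R s α z :=
  mul_div_cancel₀ _ h

lemma mul_P_eq_zero_of_Pbo_eq_zero (hP : ∀ s α s', 0 ≤ P s α s') {b : S → ℝ}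
    (hb : ∀ s, 0 ≤ b s) {α : Act} {z : Z} (h : Pbo O P b α z = 0) (s : S) {s' : S}
    (hs' : O s' = z) : b s * P s α s' = 0 := by
  have hterm : b s * Pso O P s α z = 0 :=
    (sum_eq_zero_iff_of_nonneg fun t _ => mul_nonneg (hb t) (Pso_nonneg hP t α z)).1 h s
      (mem_univ s)
  rw [Pso, mul_sum] at hterm
  have := (sum_eq_zero_iff_of_nonneg fun t _ => mul_nonneg (hb s) ?_).1 hterm s' (mem_univ s')
  · simpa [hs'] using this
  · split_ifs <;> simp [hP]

lemma succMass_eq_zero_of_Pbo_eq_zero (hP : ∀ s α s', 0 ≤ P s α s') {b : S → ℝ}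
    (hb : ∀ s, 0 ≤ b s) {α : Act} {z : Z} (h : Pbo O P b α z = 0) :
    succMass O P b α z = 0 := by
  funext s'
  unfold succMass
  split_ifs with hs'
  · exact sum_eq_zero fun s _ => mul_P_eq_zero_of_Pbo_eq_zero hP hb h s hs'
  · rfl

lemma sum_mul_rewardObs_eq_zero_of_Pbo_eq_zero (hP : ∀ s α s', 0 ≤ P s α s')
    {b : S → ℝ} (hb : ∀ s, 0 ≤ b s) {α : Act} {z : Z} (h : Pbo O P b α z = 0) :
    ∑ s, b s * rewardObs O P R s α z = 0 := by
  refine sum_eq_zero fun s _ => ?_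
  rw [rewardObs, mul_sum]
  refine sum_eq_zero fun s' _ => ?_
  split_ifs with hs'
  · rw [mul_left_comm, mul_P_eq_zero_of_Pbo_eq_zero hP hb h s hs', mul_zero]
  · rw [mul_zero]

lemma sum_mul_sum_transition_eq_sum_obs [Fintype Z] (ν f : S → ℝ) (α : Act) :
    ∑ s, ν s * ∑ s', P s α s' * (R s α s' + f s') =
      ∑ z, (∑ s, ν s * rewardObs O P R s α z + ∑ s', succMass O P ν α z s' * f s') := by
  have hfib : ∀ s s', ν s * (P s α s' * (R s α s' + f s')) = ∑ z,
      ((if O s' = z then ν s * (R s α s' * P s α s') else 0) +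
        if O s' = z then ν s * P s α s' * f s' else 0) := by
    intro s s'
    rw [sum_add_distrib, sum_ite_eq, sum_ite_eq]
    simp only [mem_univ, if_true]
    ring
  simp only [mul_sum, hfib]
  rw [sum_congr rfl fun s _ => sum_comm, sum_comm]
  refine sum_congr rfl fun z _ => ?_
  simp only [sum_add_distrib]
  congr 1
  · simp only [rewardObs, mul_sum, mul_ite, mul_zero]
  · rw [sum_comm]
    simp only [succMass, ite_mul, zero_mul, sum_mul, ite_sum_zero]

variable [Fintype Act]

lemma IsPOMDP.obsEnabled_eq (hM : IsPOMDP O P) {s : S} {z : Z} (h : O s = z) :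
    obsEnabled O P z = enabledA P s := by
  have hex : ∃ t, O t = z := ⟨s, h⟩
  rw [obsEnabled, dif_pos hex]
  exact hM.2.2.2 _ s (hex.choose_spec.trans h.symm)

lemma IsPOMDP.obsEnabled_nonempty (hM : IsPOMDP O P) {s : S} {z : Z} (h : O s = z) :
    (obsEnabled O P z).Nonempty :=
  hM.obsEnabled_eq h ▸ hM.2.2.1 s

end Transitions

section Values

variable {S Act Z : Type} [Fintype S] [Fintype Act] [Fintype Z]
  {O : S → Z} {P R : S → Act → S → ℝ} {G : Set S}

variable (O P R G) in
noncomputable def qValue (n : ℕ) (b : S → ℝ) (α : Act) : ℝ :=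
  ∑ z, (∑ s, b s * rewardObs O P R s α z + Vopt O P R G n (succMass O P b α z) z)

lemma Vopt_smul {t : ℝ} (ht : 0 ≤ t) (n : ℕ) (b : S → ℝ) (z : Z) :
    Vopt O P R G n (t • b) z = t * Vopt O P R G n b z := by
  rcases n with _ | n
  · simp [Vopt]
  rcases ht.eq_or_lt with rfl | ht
  · simp [Vopt]
  have hPbo : ∀ α z', Pbo O P (t • b) α z' = t * Pbo O P b α z' := by
    simp [Pbo, mul_sum, mul_assoc]
  have hRbel : ∀ α z', Rbel O P R (t • b) α z' = Rbel O P R b α z' := by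
    intro α z'
    simp only [Rbel, hPbo, Pi.smul_apply, smul_eq_mul, mul_assoc, ← mul_sum]
    exact mul_div_mul_left _ _ ht.ne'
  have hsuccB : ∀ α z', succB O P (t • b) α z' = succB O P b α z' := by
    intro α z'
    funext s
    simp only [succB, hPbo, Pi.smul_apply, smul_eq_mul, mul_assoc, ← mul_sum]
    split_ifs
    · exact mul_div_mul_left _ _ ht.ne'
    · rfl
  simp only [Vopt, hPbo, hRbel, hsuccB, Pi.smul_apply, smul_eq_mul,
    mul_pos_iff_of_pos_left ht]
  split_ifs
  · rw [mul_zero]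
  · rw [← maxOver_const_mul ht.le]
    simp only [mul_sum, mul_assoc]

lemma Vopt_succ_eq (hP : ∀ s α s', 0 ≤ P s α s') (n : ℕ) {b : S → ℝ} (hb : ∀ s, 0 ≤ b s)
    (z : Z) :
    Vopt O P R G (n + 1) b z =
      if ∀ s, 0 < b s → s ∈ G then 0 else maxOver (obsEnabled O P z) (qValue O P R G n b) := by
  rw [Vopt]
  congr 1
  congr 1
  funext α
  rw [qValue, sum_filter]
  refine sum_congr rfl fun z' _ => ?_
  split_ifs with hpos
  · rw [mul_add, Pbo_mul_Rbel hpos.ne', ← Vopt_smul hpos.le, Pbo_smul_succB hpos.ne']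
  · have h0 := le_antisymm (not_lt.1 hpos) (Pbo_nonneg hP hb α z')
    rw [sum_mul_rewardObs_eq_zero_of_Pbo_eq_zero hP hb h0,
      succMass_eq_zero_of_Pbo_eq_zero hP hb h0, ← zero_smul ℝ (0 : S → ℝ), Vopt_smul le_rfl]
    simp

variable (hP : ∀ s α s', 0 ≤ P s α s') (hR : ∀ s α s', 0 ≤ R s α s')
include hP hR

lemma Vopt_nonneg (n : ℕ) {b : S → ℝ} (hb : ∀ s, 0 ≤ b s) (z : Z) :
    0 ≤ Vopt O P R G n b z := by
  induction n generalizing b z with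
  | zero => rfl
  | succ n ih =>
    rw [Vopt_succ_eq hP n hb]
    split_ifs
    · rfl
    · exact maxOver_nonneg fun α _ => sum_nonneg fun z' _ =>
        add_nonneg (sum_nonneg fun s _ => mul_nonneg (hb s) (rewardObs_nonneg hP hR s α z'))
          (ih (succMass_nonneg hP hb α z') z')

lemma qValue_nonneg (n : ℕ) {b : S → ℝ} (hb : ∀ s, 0 ≤ b s) (α : Act) :
    0 ≤ qValue O P R G n b α :=
  sum_nonneg fun z' _ =>
    add_nonneg (sum_nonneg fun s _ => mul_nonneg (hb s) (rewardObs_nonneg hP hR s α z'))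
      (Vopt_nonneg hP hR n (succMass_nonneg hP hb α z') z')

lemma Vopt_le_Vopt_succ (n : ℕ) {b : S → ℝ} (hb : ∀ s, 0 ≤ b s) (z : Z) :
    Vopt O P R G n b z ≤ Vopt O P R G (n + 1) b z := by
  induction n generalizing b z with
  | zero => exact Vopt_nonneg hP hR 1 hb z
  | succ n ih =>
    rw [Vopt_succ_eq hP n hb, Vopt_succ_eq hP (n + 1) hb]
    split_ifs
    · rfl
    · exact maxOver_mono fun α _ => sum_le_sum fun z' _ =>
        add_le_add_right (ih (succMass_nonneg hP hb α z') z') _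

lemma Umin_nonneg (n : ℕ) (s : S) : 0 ≤ Umin P R G n s := by
  induction n generalizing s with
  | zero => rfl
  | succ n ih =>
    rw [Umin]
    split_ifs
    · rfl
    · exact minOver_nonneg fun α _ => sum_nonneg fun s' _ =>
        mul_nonneg (hP s α s') (add_nonneg (hR s α s') (ih s'))

lemma Umin_le_Umin_succ (n : ℕ) (s : S) : Umin P R G n s ≤ Umin P R G (n + 1) s := by
  induction n generalizing s with
  | zero => exact Umin_nonneg hP hR 1 s
  | succ n ih =>
    rw [Umin, Umin]
    split_ifs
    · rfl
    · exact minOver_mono fun α _ => sum_le_sum fun s' _ =>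
        mul_le_mul_of_nonneg_left (add_le_add_right (ih s') _) (hP s α s')

lemma Umin_succ_le {n : ℕ} {s : S} {α : Act} (hα : α ∈ enabledA P s) :
    Umin P R G (n + 1) s ≤ ∑ s', P s α s' * (R s α s' + Umin P R G n s') := by
  rw [Umin]
  split_ifs
  · exact sum_nonneg fun s' _ =>
      mul_nonneg (hP s α s') (add_nonneg (hR s α s') (Umin_nonneg hP hR n s'))
  · exact minOver_le_s19 hα

end Values

section Clipping

variable {S Act Z : Type} [Fintype S] [Fintype Act] [Fintype Z]
  {O : S → Z} {P R : S → Act → S → ℝ} {G : Set S}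

lemma exists_Vopt_succ_le_qValue (hP : ∀ s α s', 0 ≤ P s α s') (hR : ∀ s α s', 0 ≤ R s α s')
    (n : ℕ) {b : S → ℝ} (hb : ∀ s, 0 ≤ b s) {z : Z} (hz : (obsEnabled O P z).Nonempty) :
    ∃ α ∈ obsEnabled O P z, Vopt O P R G (n + 1) b z ≤ qValue O P R G n b α := by
  rw [Vopt_succ_eq hP n hb]
  split_ifs
  · obtain ⟨α, hα⟩ := hz
    exact ⟨α, hα, qValue_nonneg hP hR n hb α⟩
  · obtain ⟨α, hα, hmax⟩ := exists_maxOver_eq hz (qValue O P R G n b)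
    exact ⟨α, hα, hmax.le⟩

lemma sum_mul_Umin_succ_le (hM : IsPOMDP O P) (hR : ∀ s α s', 0 ≤ R s α s') (n : ℕ)
    {ν : S → ℝ} (hν : ∀ s, 0 ≤ ν s) {z : Z} (hobs : HasObs O ν z) {α : Act}
    (hα : α ∈ obsEnabled O P z) :
    ∑ s, ν s * Umin P R G (n + 1) s ≤
      ∑ z', (∑ s, ν s * rewardObs O P R s α z' +
        ∑ s', succMass O P ν α z' s' * Umin P R G n s') := by
  rw [← sum_mul_sum_transition_eq_sum_obs]
  refine sum_le_sum fun s _ => ?_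
  rcases (hν s).eq_or_lt with h0 | hpos
  · simp [← h0]
  · rw [hM.obsEnabled_eq (hobs s hpos)] at hα
    exact mul_le_mul_of_nonneg_left (Umin_succ_le hM.1 hR hα) hpos.le

lemma Vopt_sub_add_sum_mul_Umin_le (hM : IsPOMDP O P) (hR : ∀ s α s', 0 ≤ R s α s')
    (n : ℕ) {b ν : S → ℝ} (hν : ∀ s, 0 ≤ ν s ∧ ν s ≤ b s) {z : Z} (hobs : HasObs O b z) :
    Vopt O P R G n (b - ν) z + ∑ s, ν s * Umin P R G n s ≤ Vopt O P R G n b z := by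
  have hP := hM.1
  induction n generalizing b ν z with
  | zero => simp [Vopt, Umin]
  | succ n ih =>
    have hb : ∀ s, 0 ≤ b s := fun s => (hν s).1.trans (hν s).2
    have hbν : ∀ s, 0 ≤ (b - ν) s := fun s => sub_nonneg.2 (hν s).2
    have hsupp : ∀ s, 0 < ν s → 0 < b s := fun s h => h.trans_le (hν s).2
    by_cases hgoal : ∀ s, 0 < b s → s ∈ G
    · have hU : ∀ s, ν s * Umin P R G (n + 1) s = 0 := fun s => by
        rcases (hν s).1.eq_or_lt with h0 | hpos
        · rw [← h0, zero_mul]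
        · rw [Umin, if_pos (hgoal s (hsupp s hpos)), mul_zero]
      have hbνG : ∀ s, 0 < (b - ν) s → s ∈ G := fun s h =>
        hgoal s (h.trans_le (sub_le_self _ (hν s).1))
      rw [Vopt_succ_eq hP n hb, Vopt_succ_eq hP n hbν, if_pos hgoal, if_pos hbνG,
        sum_eq_zero fun s _ => hU s, add_zero]
    obtain ⟨s₀, hs₀, -⟩ := not_forall₂.1 hgoal
    obtain ⟨α, hα, hVα⟩ := exists_Vopt_succ_le_qValue hP hR (G := G) n hbν
      (hM.obsEnabled_nonempty (hobs s₀ hs₀))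
    have hstep : ∀ z', Vopt O P R G n (succMass O P (b - ν) α z') z' +
        ∑ s', succMass O P ν α z' s' * Umin P R G n s' ≤
          Vopt O P R G n (succMass O P b α z') z' := fun z' => by
      rw [succMass_sub]
      exact ih (fun s' => ⟨succMass_nonneg hP (fun s => (hν s).1) α z' s',
        succMass_mono hP (fun s => (hν s).2) α z' s'⟩) (hasObs_succMass b α z')
    calc Vopt O P R G (n + 1) (b - ν) z + ∑ s, ν s * Umin P R G (n + 1) s
        ≤ qValue O P R G n (b - ν) α + ∑ z', (∑ s, ν s * rewardObs O P R s α z' +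
            ∑ s', succMass O P ν α z' s' * Umin P R G n s') :=
          add_le_add hVα (sum_mul_Umin_succ_le hM hR n (fun s => (hν s).1)
            (fun s h => hobs s (hsupp s h)) hα)
      _ ≤ qValue O P R G n b α := by
          rw [qValue, qValue, ← sum_add_distrib]
          refine sum_le_sum fun z' _ => ?_
          have hr : ∑ s, (b - ν) s * rewardObs O P R s α z' + ∑ s, ν s * rewardObs O P R s α z'
              = ∑ s, b s * rewardObs O P R s α z' := by
            rw [← sum_add_distrib]
            simp [sub_mul]
          linarith [hstep z']
      _ ≤ Vopt O P R G (n + 1) b z := by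
          rw [Vopt_succ_eq hP n hb, if_neg hgoal]
          exact le_maxOver hα

end Clipping

lemma IsBeliefClip.clipped_nonneg {S : Type} [Fintype S] {b μ : S → ℝ} (hμ : IsBeliefClip b μ)
    (s : S) : 0 ≤ clipped b μ s :=
  div_nonneg (sub_nonneg.2 (hμ.1 s).2) (sub_nonneg.2 hμ.2.le)

lemma IsBeliefClip.sub_eq_smul_clipped {S : Type} [Fintype S] {b μ : S → ℝ}
    (hμ : IsBeliefClip b μ) : b - μ = (1 - ∑ s, μ s) • clipped b μ := by
  funext s
  simp only [clipped, Pi.sub_apply, Pi.smul_apply, smul_eq_mul]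
  rw [mul_div_cancel₀ _ (sub_pos.2 hμ.2).ne']

lemma ENNReal.mul_iSup_add_sum_mul_iSup_le {ι : Type} [Fintype ι] {x : ENNReal}
    {y : ι → ENNReal} {f : ℕ → ENNReal} {g : ι → ℕ → ENNReal} {h : ℕ → ENNReal}
    (hf : Monotone f) (hg : ∀ i, Monotone (g i))
    (hle : ∀ n, x * f n + ∑ i, y i * g i n ≤ h n) :
    x * (⨆ n, f n) + ∑ i, y i * ⨆ n, g i n ≤ ⨆ n, h n := by
  have hyg : ∀ i, Monotone fun n => y i * g i n := fun i _ _ hnm => mul_le_mul_right (hg i hnm) _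
  simp only [ENNReal.mul_iSup]
  rw [ENNReal.finsetSum_iSup_of_monotone hyg, ENNReal.iSup_add_iSup_of_monotone
    (fun _ _ hnm => mul_le_mul_right (hf hnm) _)
    (fun _ _ hnm => sum_le_sum fun i _ => hyg i hnm)]
  exact iSup_mono hle

theorem stmt_19_general {S Act Z : Type} [Fintype S] [Fintype Act]
    [Fintype Z]
    (O : S → Z) (P : S → Act → S → ℝ) (hM : IsPOMDP O P)
    (R : S → Act → S → ℝ) (G : Set S) (hR : ∀ s α s', 0 ≤ R s α s')
    (b μ : S → ℝ) (z : Z) (hobs : HasObs O b z)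
    (hμ : IsBeliefClip b μ) :
    ENNReal.ofReal (1 - ∑ s, μ s) *
        (⨆ n : ℕ, ENNReal.ofReal (Vopt O P R G n (clipped b μ) z)) +
      ∑ s, ENNReal.ofReal (μ s) * ⨆ n : ℕ, ENNReal.ofReal (Umin P R G n s) ≤
      ⨆ n : ℕ, ENNReal.ofReal (Vopt O P R G n b z) := by
  have hP := hM.1
  have hδ : 0 ≤ 1 - ∑ s, μ s := sub_nonneg.2 hμ.2.le
  refine ENNReal.mul_iSup_add_sum_mul_iSup_le
    (monotone_nat_of_le_succ fun n => ENNReal.ofReal_le_ofReal <|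
      Vopt_le_Vopt_succ hP hR n hμ.clipped_nonneg z)
    (fun s => monotone_nat_of_le_succ fun n => ENNReal.ofReal_le_ofReal <|
      Umin_le_Umin_succ hP hR n s)
    fun n => ?_
  have key := Vopt_sub_add_sum_mul_Umin_le (G := G) hM hR n hμ.1 hobs
  rw [hμ.sub_eq_smul_clipped, Vopt_smul hδ] at key
  have hμU : ∀ s, 0 ≤ μ s * Umin P R G n s := fun s =>
    mul_nonneg (hμ.1 s).1 (Umin_nonneg hP hR n s)
  simp only [← ENNReal.ofReal_mul hδ, ← ENNReal.ofReal_mul (hμ.1 _).1]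
  rw [← ENNReal.ofReal_sum_of_nonneg fun s _ => hμU s, ← ENNReal.ofReal_add
    (mul_nonneg hδ (Vopt_nonneg hP hR n hμ.clipped_nonneg z)) (sum_nonneg fun s _ => hμU s)]
  exact ENNReal.ofReal_le_ofReal key

/-- limit form of the belief clipping lemma for nonnegative rewards, with
suprema taken in `[0,∞]`:
`(1 − Δ)·V*(b ⊖ μ) + ∑_s μ(s)·U*(s) ≤ V*(b)`. -/
theorem stmt_19 {S Act Z : Type} [Fintype S] [Nonempty S] [Fintype Act] [Nonempty Act]
    [Fintype Z] [Nonempty Z]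
    (O : S → Z) (P : S → Act → S → ℝ) (hM : IsPOMDP O P)
    (R : S → Act → S → ℝ) (G : Set S) (hR : ∀ s α s', 0 ≤ R s α s')
    (hG : ObservableGoal O G)
    (b μ : S → ℝ) (z : Z) (hb : IsBelief b) (hobs : HasObs O b z)
    (hμ : IsBeliefClip b μ) :
    ENNReal.ofReal (1 - ∑ s, μ s) *
        (⨆ n : ℕ, ENNReal.ofReal (Vopt O P R G n (clipped b μ) z)) +
      ∑ s, ENNReal.ofReal (μ s) * ⨆ n : ℕ, ENNReal.ofReal (Umin P R G n s) ≤
      ⨆ n : ℕ, ENNReal.ofReal (Vopt O P R G n b z) :=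
  stmt_19_general O P hM R G hR b μ z hobs hμ
end
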